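/- For F = -2·x0·x1·x2 + x3·(x1² - x2²) on ℝ⁴, the polynomial |∇F|²·ΔF − (∇F)ᵀ·H(F)·(∇F) is divisible by F in ℝ[x0,x1,x2,x3]. -/

import Mathlib

/-! Lawson's cubic `F` is harmonic, so `|∇F|²·ΔF − (∇F)ᵀ·H(F)·(∇F)` reduces to
`−(∇F)ᵀ·H(F)·(∇F)`, and a direct computation gives `(∇F)ᵀ·H(F)·(∇F) = 8·|x|²·F`. -/

open MvPolynomial

namespace MvPolynomial

variable {σ R : Type*} [CommRing R]

@[simp]
lemma pderiv_ofNat (i : σ) (n : ℕ) [n.AtLeastTwo] :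
    pderiv i (ofNat(n) : MvPolynomial σ R) = 0 := by
  rw [← map_ofNat C n]
  exact pderiv_C

variable [Fintype σ]

noncomputable def gradNormSq (F : MvPolynomial σ R) : MvPolynomial σ R :=
  ∑ i, pderiv i F ^ 2

noncomputable def laplacian (F : MvPolynomial σ R) : MvPolynomial σ R :=
  ∑ i, pderiv i (pderiv i F)

noncomputable def hessianGradForm (F : MvPolynomial σ R) : MvPolynomial σ R :=
  ∑ i, ∑ j, pderiv i F * pderiv i (pderiv j F) * pderiv j F

noncomputable def minimalConeOperator (F : MvPolynomial σ R) : MvPolynomial σ R :=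
  gradNormSq F * laplacian F - hessianGradForm F

lemma minimalConeOperator_of_laplacian_eq_zero {F : MvPolynomial σ R} (hF : laplacian F = 0) :
    minimalConeOperator F = -hessianGradForm F := by
  rw [minimalConeOperator, hF, mul_zero, zero_sub]

end MvPolynomial

section LawsonCubic

variable {R : Type*} [CommRing R]

noncomputable def lawsonCubic : MvPolynomial (Fin 4) R :=
  -2 * X 0 * X 1 * X 2 + X 3 * (X 1 ^ 2 - X 2 ^ 2)

lemma pderiv_zero_lawsonCubic :
    pderiv 0 (lawsonCubic : MvPolynomial (Fin 4) R) = -2 * X 1 * X 2 := by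
  simp only [lawsonCubic, map_add, map_sub, map_neg, Derivation.leibniz, Derivation.leibniz_pow,
    pderiv_X, Pi.single_apply, Fin.reduceEq, ↓reduceIte, smul_eq_mul, nsmul_eq_mul, pderiv_ofNat]
  ring

lemma pderiv_one_lawsonCubic :
    pderiv 1 (lawsonCubic : MvPolynomial (Fin 4) R) = -2 * X 0 * X 2 + 2 * X 3 * X 1 := by
  simp only [lawsonCubic, map_add, map_sub, map_neg, Derivation.leibniz, Derivation.leibniz_pow,
    pderiv_X, Pi.single_apply, Fin.reduceEq, ↓reduceIte, smul_eq_mul, nsmul_eq_mul, pderiv_ofNat]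
  ring

lemma pderiv_two_lawsonCubic :
    pderiv 2 (lawsonCubic : MvPolynomial (Fin 4) R) = -2 * X 0 * X 1 - 2 * X 3 * X 2 := by
  simp only [lawsonCubic, map_add, map_sub, map_neg, Derivation.leibniz, Derivation.leibniz_pow,
    pderiv_X, Pi.single_apply, Fin.reduceEq, ↓reduceIte, smul_eq_mul, nsmul_eq_mul, pderiv_ofNat]
  ring

lemma pderiv_three_lawsonCubic :
    pderiv 3 (lawsonCubic : MvPolynomial (Fin 4) R) = X 1 ^ 2 - X 2 ^ 2 := by
  simp only [lawsonCubic, map_add, map_sub, map_neg, Derivation.leibniz, Derivation.leibniz_pow,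
    pderiv_X, Pi.single_apply, Fin.reduceEq, ↓reduceIte, smul_eq_mul, nsmul_eq_mul, pderiv_ofNat]
  ring

lemma laplacian_lawsonCubic : laplacian (lawsonCubic : MvPolynomial (Fin 4) R) = 0 := by
  simp only [laplacian, Fin.sum_univ_four, pderiv_zero_lawsonCubic, pderiv_one_lawsonCubic,
    pderiv_two_lawsonCubic, pderiv_three_lawsonCubic, map_add, map_sub, map_neg,
    Derivation.leibniz, Derivation.leibniz_pow, pderiv_X, Pi.single_apply, Fin.reduceEq,
    ↓reduceIte, smul_eq_mul, nsmul_eq_mul, pderiv_ofNat]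
  ring

lemma hessianGradForm_lawsonCubic :
    hessianGradForm (lawsonCubic : MvPolynomial (Fin 4) R) =
      8 * (∑ i, X i ^ 2) * lawsonCubic := by
  simp only [hessianGradForm, Fin.sum_univ_four, pderiv_zero_lawsonCubic, pderiv_one_lawsonCubic,
    pderiv_two_lawsonCubic, pderiv_three_lawsonCubic, map_add, map_sub, map_neg,
    Derivation.leibniz, Derivation.leibniz_pow, pderiv_X, Pi.single_apply, Fin.reduceEq,
    ↓reduceIte, smul_eq_mul, nsmul_eq_mul, pderiv_ofNat]
  rw [lawsonCubic]
  ring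

lemma minimalConeOperator_lawsonCubic :
    minimalConeOperator (lawsonCubic : MvPolynomial (Fin 4) R) =
      -8 * (∑ i, X i ^ 2) * lawsonCubic := by
  rw [minimalConeOperator_of_laplacian_eq_zero laplacian_lawsonCubic, hessianGradForm_lawsonCubic]
  ring

end LawsonCubic

/-- For `F = -2·x0·x1·x2 + x3·(x1² - x2²)` on ℝ⁴, the polynomial
`|∇F|²·ΔF − (∇F)ᵀ·H(F)·(∇F)` is divisible by `F`. -/
theorem lawson_cubic_minimal_surface_eq :
    ((-2 : MvPolynomial (Fin 4) ℝ) * X 0 * X 1 * X 2 + X 3 * (X 1 ^ 2 - X 2 ^ 2)) ∣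
      (fun (F : MvPolynomial (Fin 4) ℝ) =>
        (∑ i : Fin 4, (pderiv i F) ^ 2) * (∑ i : Fin 4, pderiv i (pderiv i F))
          - ∑ i : Fin 4, ∑ j : Fin 4, (pderiv i F) * (pderiv i (pderiv j F)) * (pderiv j F))
        ((-2 : MvPolynomial (Fin 4) ℝ) * X 0 * X 1 * X 2 + X 3 * (X 1 ^ 2 - X 2 ^ 2)) := by
  show lawsonCubic ∣ minimalConeOperator lawsonCubic
  rw [minimalConeOperator_lawsonCubic]
  exact dvd_mul_left _ _
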